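/- Let T_A = Aℤⁿ/qℤⁿ be a discrete weighted torus satisfying the distance condition. Then for every x ∈ Aℤⁿ and every i with 1 ≤ i ≤ n, the sum of Ollivier curvatures along the i-th fundamental cycle is non-positive: Σ_{j=0}^{q−1} κ([x + jα_i], [x + (j+1)α_i]) ≤ 0. -/

import Mathlib

open Filter Topology

noncomputable section

namespace PMT

/-- The `i`-th standard unit vector in `ℤⁿ`. -/
def e (n : ℕ) (i : Fin n) : Fin n → ℤ := fun j => if j = i then 1 else 0

/-- The grid graph on `ℤⁿ`: `x ∼ y` iff `‖x − y‖₁ = 1`. -/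
def grid (n : ℕ) : SimpleGraph (Fin n → ℤ) where
  Adj x y := (∑ i, |x i - y i|) = 1
  symm := by
    constructor
    intro x y h
    have h' : ∀ i ∈ Finset.univ, |y i - x i| = |x i - y i| :=
      fun i _ => abs_sub_comm _ _
    rw [Finset.sum_congr rfl h']
    exact h
  loopless := by constructor; intro x h; simp at h

/-- The graph Laplacian `Δf(x) = Σ_{y∼x} w(x,y)(f(y)−f(x))` of an integer-valued function. -/
def lap {V : Type*} (G : SimpleGraph V) (w : V → V → ℝ) (f : V → ℤ) (x : V) : ℝ :=
  ∑ᶠ y ∈ {y | G.Adj x y}, w x y * ((f y : ℝ) - (f x : ℝ))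

/-- `f : V → ℤ` is 1-Lipschitz with respect to the combinatorial graph distance. -/
def Lip1 {V : Type*} (G : SimpleGraph V) (f : V → ℤ) : Prop :=
  ∀ x y, |f x - f y| ≤ (G.dist x y : ℤ)

/-- Ollivier curvature of the pair `(x, y)`:
`κ(x,y) = inf {Δf(x) − Δf(y) | f : V → ℤ, f 1-Lipschitz, f(y) = f(x) + 1}`. -/
def kappa {V : Type*} (G : SimpleGraph V) (w : V → V → ℝ) (x y : V) : ℝ :=
  sInf {r | ∃ f : V → ℤ, Lip1 G f ∧ f y = f x + 1 ∧ r = lap G w f x - lap G w f y}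

/-- Scalar curvature `R(x) = Σ_{y∼x} κ(x,y)`. -/
def scal {V : Type*} (G : SimpleGraph V) (w : V → V → ℝ) (x : V) : ℝ :=
  ∑ᶠ y ∈ {y | G.Adj x y}, kappa G w x y

/-- A weighted grid graph `(ℤⁿ, w)`: symmetric weights, positive on edges. -/
structure GridWeight (n : ℕ) where
  w : (Fin n → ℤ) → (Fin n → ℤ) → ℝ
  symm : ∀ x y, w x y = w y x
  pos : ∀ x y, (grid n).Adj x y → 0 < w x y

/-- The quantity `Abs(x)` measuring the distortion from the standard grid graph. -/
def Absf (n : ℕ) (w : (Fin n → ℤ) → (Fin n → ℤ) → ℝ) (x : Fin n → ℤ) : ℝ :=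
  ∑ i, ∑ j, if i ≠ j then
      (|w x (x + e n i) - w (x + e n j) (x + e n j + e n i)| +
       |w x (x + e n i) - w (x - e n j) (x - e n j + e n i)| +
       |w x (x - e n i) - w (x + e n j) (x + e n j - e n i)| +
       |w x (x - e n i) - w (x - e n j) (x - e n j - e n i)|)
    else 0

/-- The `ℓ^∞` norm `‖x‖_∞` of `x ∈ ℤⁿ`, as a natural number. -/
def nInf {n : ℕ} (x : Fin n → ℤ) : ℕ := Finset.univ.sup fun i => (x i).natAbs

/-- The cube `Q_r = {y ∈ ℤⁿ : ‖y‖∞ ≤ r}` as a finset. -/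
def Qr (n r : ℕ) : Finset (Fin n → ℤ) := Finset.Icc (fun _ => -(r : ℤ)) (fun _ => (r : ℤ))

/-- `Σ_{e ∈ E_r} w(e)`: the sum of weights of edges with exactly one endpoint in `Q_r`
(each such edge is counted once, via its endpoint inside `Q_r`). -/
def ErSum (n : ℕ) (w : (Fin n → ℤ) → (Fin n → ℤ) → ℝ) (r : ℕ) : ℝ :=
  ∑ x ∈ Qr n r, ∑ i,
    ((if x + e n i ∉ Qr n r then w x (x + e n i) else 0) +
     (if x - e n i ∉ Qr n r then w x (x - e n i) else 0))

/-- `Σ_{τ ∈ Ẽ_r} w(τ)`: the sum of weights of edges joining the sphere `S_{r+1}` to the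
sphere `S_{r+2}` (each such edge is counted once, via its endpoint in `S_{r+1}`). -/
def TErSum (n : ℕ) (w : (Fin n → ℤ) → (Fin n → ℤ) → ℝ) (r : ℕ) : ℝ :=
  ∑ x ∈ Qr n (r + 1), if nInf x = r + 1 then
      (∑ i, ((if nInf (x + e n i) = r + 2 then w x (x + e n i) else 0) +
             (if nInf (x - e n i) = r + 2 then w x (x - e n i) else 0)))
    else 0

/-- The weighted grid graph `(ℤⁿ, w)` is asymptotically flat: there is `p > n` with
`w = 1 + o(1)`, `Abs(x) = O(‖x‖∞^{−p})` and `|R(x)| = O(‖x‖∞^{−p})` as `‖x‖∞ → ∞`. -/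
def AsympFlatGrid (n : ℕ) (W : GridWeight n) : Prop :=
  ∃ p : ℝ, (n : ℝ) < p ∧
    (∀ ε : ℝ, 0 < ε → ∃ M : ℕ, ∀ x y, (grid n).Adj x y → M ≤ nInf x → |W.w x y - 1| ≤ ε) ∧
    (∃ C : ℝ, ∃ M : ℕ, 0 < M ∧ ∀ x, M ≤ nInf x → Absf n W.w x ≤ C * (nInf x : ℝ) ^ (-p)) ∧
    (∃ C : ℝ, ∃ M : ℕ, 0 < M ∧ ∀ x, M ≤ nInf x → |scal (grid n) W.w x| ≤ C * (nInf x : ℝ) ^ (-p))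


/-- The data of a discrete torus `T_A = Aℤⁿ/qℤⁿ`: an integer matrix `A` with
`det A ≠ 0`, and `q = k·|det A|` for some `k ∈ ℤ₊`. We parametrize the lattice `Aℤⁿ` by
`ℤⁿ` via `z ↦ Az` (so the vertex `x = Az` corresponds to `z`, and `α_i = A e_i`
corresponds to `e_i`). -/
structure TorusData (n : ℕ) where
  A : Matrix (Fin n) (Fin n) ℤ
  hdet : A.det ≠ 0
  k : ℕ
  hk : 0 < k

/-- `q = k·|det A|`. -/
def TorusData.q {n : ℕ} (T : TorusData n) : ℕ := T.k * T.A.det.natAbs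

/-- The subgroup `{z ∈ ℤⁿ | Az ∈ qℤⁿ}` of `ℤⁿ`; under `z ↦ Az` it corresponds to the
sublattice `qℤⁿ ⊆ Aℤⁿ`. -/
def TorusData.lat {n : ℕ} (T : TorusData n) : AddSubgroup (Fin n → ℤ) where
  carrier := {z | ∀ j, ((T.q : ℤ)) ∣ T.A.mulVec z j}
  zero_mem' := by intro j; simp [Matrix.mulVec_zero]
  add_mem' := by
    intro a b ha hb j
    rw [Matrix.mulVec_add]
    exact dvd_add (ha j) (hb j)
  neg_mem' := by
    intro a ha j
    rw [Matrix.mulVec_neg]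
    exact dvd_neg.mpr (ha j)

/-- The vertex set of the discrete torus `T_A = Aℤⁿ/qℤⁿ` (in the `z`-parametrization). -/
def TorusV {n : ℕ} (T : TorusData n) : Type := (Fin n → ℤ) ⧸ T.lat

instance {n : ℕ} (T : TorusData n) : AddCommGroup (TorusV T) :=
  QuotientAddGroup.Quotient.addCommGroup T.lat

/-- The quotient map `Aℤⁿ → T_A` (in the `z`-parametrization, `z` stands for `x = Az`). -/
def tmk {n : ℕ} (T : TorusData n) (z : Fin n → ℤ) : TorusV T := QuotientAddGroup.mk z

/-- The graph structure of the discrete torus: `[x] ∼ [y]` iff `x − y ∈ qℤⁿ ± α_i`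
for some `i` (and `[x] ≠ [y]`, so that the graph is simple). -/
def torusG {n : ℕ} (T : TorusData n) : SimpleGraph (TorusV T) where
  Adj a b := a ≠ b ∧ ∃ i : Fin n, b - a = tmk T (e n i) ∨ a - b = tmk T (e n i)
  symm := by
    constructor
    rintro a b ⟨hne, i, h | h⟩
    · exact ⟨hne.symm, i, Or.inr h⟩
    · exact ⟨hne.symm, i, Or.inl h⟩
  loopless := by constructor; rintro a ⟨hne, -⟩; exact hne rfl

/-- The distance condition: every combinatorial ball of radius 2 in the lattice `Aℤⁿ`
embeds isometrically into the torus, i.e. `d(u,v) = d([u],[v])` for all `u, v ∈ B₂(x)`. -/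
def DistCond {n : ℕ} (T : TorusData n) : Prop :=
  ∀ x u v : Fin n → ℤ, (grid n).dist x u ≤ 2 → (grid n).dist x v ≤ 2 →
    (grid n).dist u v = (torusG T).dist (tmk T u) (tmk T v)

/-! Along the cycle `x_j = [x + jα_i]`, test the curvature `κ(x_j, x_{j+1})` with
`f_j = d(x_{j-1}, ·)`. The distance condition makes the torus look like the grid on the
balls involved, so `f_j = f_{j+1} + 1` on the closed unit ball around `x_{j+1}`; hence
`Δf_j(x_{j+1}) = Δf_{j+1}(x_{j+1})` and `κ(x_j, x_{j+1}) ≤ Δf_j(x_j) - Δf_{j+1}(x_{j+1})`,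
a telescoping sum over the cycle. -/

section Curvature

variable {V : Type*} {G : SimpleGraph V}

lemma lip1_dist (hG : G.Connected) (p : V) : Lip1 G fun a => (G.dist p a : ℤ) := by
  intro a b
  dsimp only
  have hab := hG.dist_triangle (u := p) (v := a) (w := b)
  have hba := hG.dist_triangle (u := p) (v := b) (w := a)
  rw [SimpleGraph.dist_comm (u := b)] at hba
  rw [abs_le]
  constructor <;> omega

lemma lap_eq_sum_neighborFinset [G.LocallyFinite] (w : V → V → ℝ) (f : V → ℤ) (x : V) :
    lap G w f x = ∑ y ∈ G.neighborFinset x, w x y * ((f y : ℝ) - f x) :=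
  finsum_mem_eq_toFinset_sum _ (G.neighborSet x)

lemma abs_lap_le [G.LocallyFinite] (w : V → V → ℝ) {f : V → ℤ} (hf : Lip1 G f) (x : V) :
    |lap G w f x| ≤ ∑ y ∈ G.neighborFinset x, |w x y| := by
  rw [lap_eq_sum_neighborFinset]
  refine (Finset.abs_sum_le_sum_abs _ _).trans (Finset.sum_le_sum fun y hy => ?_)
  have hxy : |f y - f x| ≤ 1 := by
    simpa [SimpleGraph.dist_comm, SimpleGraph.dist_eq_one_iff_adj.mpr
      ((G.mem_neighborFinset x y).mp hy)] using hf y x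
  have hxy' : |(f y : ℝ) - f x| ≤ 1 := by exact_mod_cast hxy
  rw [abs_mul]
  exact mul_le_of_le_one_right (abs_nonneg _) hxy'

lemma kappa_le_lap_sub [G.LocallyFinite] (w : V → V → ℝ) {x y : V} {f : V → ℤ}
    (hf : Lip1 G f) (hxy : f y = f x + 1) :
    kappa G w x y ≤ lap G w f x - lap G w f y := by
  refine csInf_le
    ⟨-(∑ b ∈ G.neighborFinset x, |w x b| + ∑ b ∈ G.neighborFinset y, |w y b|), ?_⟩
    ⟨f, hf, hxy, rfl⟩
  rintro r ⟨g, hg, -, rfl⟩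
  have hx := (abs_le.mp (abs_lap_le w hg x)).1
  have hy := (abs_le.mp (abs_lap_le w hg y)).2
  linarith

lemma lap_congr_add_const (w : V → V → ℝ) {f g : V → ℤ} {x : V} (c : ℤ)
    (h : ∀ b, (b = x ∨ G.Adj x b) → f b = g b + c) :
    lap G w f x = lap G w g x := by
  refine finsum_mem_congr rfl fun y hy => ?_
  rw [h y (.inr hy), h x (.inl rfl)]
  push_cast
  ring

theorem sum_kappa_cycle_nonpos [G.LocallyFinite] (hG : G.Connected) (w : V → V → ℝ)
    {x : ℤ → V} {q : ℕ} (hper : Function.Periodic x q) (hadj : ∀ j, G.Adj (x j) (x (j + 1)))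
    (hgeod : ∀ j b, (b = x (j + 1) ∨ G.Adj (x (j + 1)) b) →
      G.dist (x (j - 1)) b = G.dist (x j) b + 1) :
    ∑ j ∈ Finset.range q, kappa G w (x j) (x (j + 1)) ≤ 0 := by
  set f : ℤ → V → ℤ := fun j b => G.dist (x (j - 1)) b with hf
  set g : ℕ → ℝ := fun j => lap G w (f j) (x j) with hg
  have hstep (j : ℕ) : kappa G w (x j) (x (j + 1)) ≤ g j - g (j + 1) := by
    have hshift : ∀ b, (b = x (j + 1) ∨ G.Adj (x (j + 1)) b) → f j b = f (j + 1) b + 1 := by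
      intro b hb
      simp only [hf, add_sub_cancel_right]
      exact_mod_cast hgeod j b hb
    have hval : f j (x (j + 1)) = f j (x j) + 1 := by
      have hprev : G.dist (x ((j : ℤ) - 1)) (x j) = 1 := by
        simpa using SimpleGraph.dist_eq_one_iff_adj.mpr (hadj ((j : ℤ) - 1))
      rw [hshift _ (.inl rfl)]
      simp [hf, hprev, SimpleGraph.dist_eq_one_iff_adj.mpr (hadj _)]
    calc kappa G w (x j) (x (j + 1))
        ≤ lap G w (f j) (x j) - lap G w (f j) (x (j + 1)) :=
          kappa_le_lap_sub w (lip1_dist hG _) hval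
      _ = g j - g (j + 1) := by
          rw [lap_congr_add_const w 1 hshift]
          simp [hg]
  have hperiod : g q = g 0 := by
    have hprev : x ((q : ℤ) - 1) = x (0 - 1) := by
      rw [sub_eq_add_neg, add_comm, hper, zero_sub]
    simp only [hg, hf, Nat.cast_zero, hprev, hper.eq]
  calc ∑ j ∈ Finset.range q, kappa G w (x j) (x (j + 1))
      ≤ ∑ j ∈ Finset.range q, (g j - g (j + 1)) := Finset.sum_le_sum fun j _ => hstep j
    _ = 0 := by rw [Finset.sum_range_sub', hperiod, sub_self]

end Curvature

section Grid

variable {n : ℕ}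

def l1dist (u v : Fin n → ℤ) : ℤ := ∑ k, |u k - v k|

lemma grid_adj_iff {u v : Fin n → ℤ} : (grid n).Adj u v ↔ l1dist u v = 1 := Iff.rfl

lemma l1dist_nonneg (u v : Fin n → ℤ) : 0 ≤ l1dist u v :=
  Finset.sum_nonneg fun _ _ => abs_nonneg _

lemma l1dist_self (u : Fin n → ℤ) : l1dist u u = 0 := by simp [l1dist]

lemma l1dist_comm (u v : Fin n → ℤ) : l1dist u v = l1dist v u := by
  simp only [l1dist, abs_sub_comm]

lemma eq_of_l1dist_eq_zero {u v : Fin n → ℤ} (h : l1dist u v = 0) : u = v := by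
  funext k
  have hk := (Finset.sum_eq_zero_iff_of_nonneg fun j _ => abs_nonneg (u j - v j)).mp h k
    (Finset.mem_univ k)
  exact sub_eq_zero.mp (abs_eq_zero.mp hk)

lemma l1dist_triangle (u m v : Fin n → ℤ) : l1dist u v ≤ l1dist u m + l1dist m v := by
  rw [l1dist, l1dist, l1dist, ← Finset.sum_add_distrib]
  exact Finset.sum_le_sum fun k _ => abs_sub_le _ _ _

lemma l1dist_eq_abs_add_sum_compl (u v : Fin n → ℤ) (m : Fin n) :
    l1dist u v = |u m - v m| + ∑ k ∈ {m}ᶜ, |u k - v k| :=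
  Fintype.sum_eq_add_sum_compl m _

lemma add_smul_e_apply (u : Fin n → ℤ) (c : ℤ) (m k : Fin n) :
    (u + c • e n m) k = if k = m then u k + c else u k := by
  by_cases h : k = m <;> simp [e, h]

lemma l1dist_add_smul_e (u v : Fin n → ℤ) (m : Fin n) (c : ℤ) :
    l1dist (u + c • e n m) v = |u m + c - v m| + ∑ k ∈ {m}ᶜ, |u k - v k| := by
  rw [l1dist_eq_abs_add_sum_compl _ _ m, add_smul_e_apply, if_pos rfl]
  congr 1
  refine Finset.sum_congr rfl fun k hk => ?_
  rw [add_smul_e_apply, if_neg (by simpa using hk)]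

lemma l1dist_add_smul_e_add (z : Fin n → ℤ) (i : Fin n) (a b : ℤ) (δ : Fin n → ℤ) :
    l1dist (z + a • e n i) (z + b • e n i + δ) =
      |a - b - δ i| + ∑ k ∈ {i}ᶜ, |δ k| := by
  have hcoord (k : Fin n) :
      (z + a • e n i) k - (z + b • e n i + δ) k = (a - b) * e n i k - δ k := by
    simp only [Pi.add_apply, Pi.smul_apply, smul_eq_mul]
    ring
  rw [l1dist_eq_abs_add_sum_compl _ _ i, hcoord]
  congr 1
  · simp [e]
  · refine Finset.sum_congr rfl fun k hk => ?_
    rw [hcoord]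
    simp [e, show k ≠ i by simpa using hk]

lemma l1dist_smul_e_add_smul_e (z : Fin n → ℤ) (i : Fin n) (a b : ℤ) :
    l1dist (z + a • e n i) (z + b • e n i) = |a - b| := by
  simpa using l1dist_add_smul_e_add z i a b 0

lemma l1dist_add_smul_e_self (u : Fin n → ℤ) (m : Fin n) (c : ℤ) :
    l1dist u (u + c • e n m) = |c| := by
  rw [l1dist_comm, l1dist_add_smul_e]
  simp

lemma exists_l1dist_add_smul_e_eq {u v : Fin n → ℤ} (huv : u ≠ v) :
    ∃ (m : Fin n) (s : ℤ), |s| = 1 ∧ l1dist (u + s • e n m) v = l1dist u v - 1 := by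
  obtain ⟨m, hm⟩ := Function.ne_iff.mp huv
  refine ⟨m, Int.sign (v m - u m), ?_, ?_⟩
  · rw [Int.abs_sign_of_ne_zero (sub_ne_zero.mpr (Ne.symm hm))]
  · rw [l1dist_add_smul_e, l1dist_eq_abs_add_sum_compl u v m]
    have hcoord : |u m + Int.sign (v m - u m) - v m| = |u m - v m| - 1 := by
      rcases lt_or_gt_of_ne hm with h | h
      · rw [Int.sign_eq_one_of_pos (by omega), abs_of_nonpos (by omega),
          abs_of_nonpos (by omega)]
        ring
      · rw [Int.sign_eq_neg_one_of_neg (by omega), abs_of_nonneg (by omega),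
          abs_of_nonneg (by omega)]
        ring
    rw [hcoord]
    ring

lemma exists_eq_add_smul_e_of_grid_adj {u v : Fin n → ℤ} (h : (grid n).Adj u v) :
    ∃ (m : Fin n) (s : ℤ), |s| = 1 ∧ v = u + s • e n m := by
  obtain ⟨m, s, hs, hstep⟩ := exists_l1dist_add_smul_e_eq h.ne
  rw [grid_adj_iff.mp h, sub_self] at hstep
  exact ⟨m, s, hs, (eq_of_l1dist_eq_zero hstep).symm⟩

lemma l1dist_le_length {u v : Fin n → ℤ} (p : (grid n).Walk u v) :
    l1dist u v ≤ p.length := by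
  induction p with
  | nil => simp [l1dist_self]
  | @cons u w v h p ih =>
    have := l1dist_triangle u w v
    rw [SimpleGraph.Walk.length_cons, grid_adj_iff.mp h] at *
    push_cast
    linarith

lemma exists_walk_length_eq_l1dist :
    ∀ (N : ℕ) (u v : Fin n → ℤ), l1dist u v = N → ∃ p : (grid n).Walk u v, p.length = N
  | 0, u, v, h => by
    obtain rfl := eq_of_l1dist_eq_zero h
    exact ⟨.nil, rfl⟩
  | N + 1, u, v, h => by
    have huv : u ≠ v := by
      rintro rfl
      rw [l1dist_self] at h
      omega
    obtain ⟨m, s, hs, hstep⟩ := exists_l1dist_add_smul_e_eq huv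
    have hadj : (grid n).Adj u (u + s • e n m) := by
      rw [grid_adj_iff, l1dist_add_smul_e_self, hs]
    obtain ⟨p, hp⟩ := exists_walk_length_eq_l1dist N _ v (by rw [hstep, h]; push_cast; ring)
    exact ⟨.cons hadj p, by rw [SimpleGraph.Walk.length_cons, hp]⟩

lemma grid_dist_eq_l1dist (u v : Fin n → ℤ) : ((grid n).dist u v : ℤ) = l1dist u v := by
  have hN := Int.toNat_of_nonneg (l1dist_nonneg u v)
  obtain ⟨p, hp⟩ := exists_walk_length_eq_l1dist _ u v hN.symm
  obtain ⟨p', hp'⟩ := SimpleGraph.Reachable.exists_walk_length_eq_dist ⟨p⟩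
  have hle : (grid n).dist u v ≤ (l1dist u v).toNat := hp ▸ SimpleGraph.dist_le p
  have hge := hp' ▸ l1dist_le_length p'
  omega

lemma grid_connected : (grid n).Connected := by
  refine (SimpleGraph.connected_iff _).mpr ⟨fun u v => ?_, ⟨0⟩⟩
  obtain ⟨p, -⟩ :=
    exists_walk_length_eq_l1dist _ u v (Int.toNat_of_nonneg (l1dist_nonneg u v)).symm
  exact ⟨p⟩

end Grid

section Torus

variable {n : ℕ}

lemma q_smul_e_mem_lat (T : TorusData n) (i : Fin n) : (T.q : ℤ) • e n i ∈ T.lat := by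
  intro j
  rw [Matrix.mulVec_smul]
  exact dvd_mul_right _ _

lemma exists_eq_tmk_add_smul_e_of_adj {T : TorusData n} {a : Fin n → ℤ} {b : TorusV T}
    (h : (torusG T).Adj (tmk T a) b) :
    ∃ (m : Fin n) (s : ℤ), |s| = 1 ∧ b = tmk T (a + s • e n m) := by
  obtain ⟨-, m, hm | hm⟩ := h
  · exact ⟨m, 1, abs_one, by rw [one_smul, ← sub_add_cancel b (tmk T a), hm, add_comm]; rfl⟩
  · refine ⟨m, -1, by simp, ?_⟩
    rw [neg_one_smul, ← sub_sub_cancel (tmk T a) b, hm]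
    rfl

lemma exists_l1dist_le_one_of_eq_or_adj {T : TorusData n} {a : Fin n → ℤ} {b : TorusV T}
    (h : b = tmk T a ∨ (torusG T).Adj (tmk T a) b) :
    ∃ δ : Fin n → ℤ, l1dist δ 0 ≤ 1 ∧ b = tmk T (a + δ) := by
  rcases h with rfl | hadj
  · exact ⟨0, by rw [l1dist_self]; norm_num, by rw [add_zero]⟩
  · obtain ⟨m, s, hs, rfl⟩ := exists_eq_tmk_add_smul_e_of_adj hadj
    refine ⟨s • e n m, ?_, rfl⟩
    rw [l1dist_comm, ← zero_add (s • e n m), l1dist_add_smul_e_self, hs]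

lemma torusG_reachable_of_grid_adj (T : TorusData n) {u v : Fin n → ℤ} (h : (grid n).Adj u v) :
    (torusG T).Reachable (tmk T u) (tmk T v) := by
  obtain ⟨m, s, hs, rfl⟩ := exists_eq_add_smul_e_of_grid_adj h
  by_cases heq : tmk T u = tmk T (u + s • e n m)
  · rw [heq]
  refine SimpleGraph.Adj.reachable ⟨heq, m, ?_⟩
  rcases (abs_eq zero_le_one).mp hs with rfl | rfl
  · left
    rw [one_smul, sub_eq_iff_eq_add']
    rfl
  · right
    rw [neg_one_smul, sub_eq_iff_eq_add', ← sub_eq_iff_eq_add, ← sub_eq_add_neg]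
    rfl

lemma torusG_connected (T : TorusData n) : (torusG T).Connected := by
  refine (SimpleGraph.connected_iff _).mpr ⟨fun a b => ?_, ⟨tmk T 0⟩⟩
  obtain ⟨u, rfl⟩ : ∃ u, tmk T u = a := QuotientAddGroup.mk_surjective a
  obtain ⟨v, rfl⟩ : ∃ v, tmk T v = b := QuotientAddGroup.mk_surjective b
  refine (SimpleGraph.reachable_iff_reflTransGen _ _).mpr ?_
  refine Relation.ReflTransGen.lift' (r := (grid n).Adj) (tmk T) (fun u w h => ?_) u v ?_
  · exact (SimpleGraph.reachable_iff_reflTransGen _ _).mp (torusG_reachable_of_grid_adj T h)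
  · exact (SimpleGraph.reachable_iff_reflTransGen _ _).mp (grid_connected.preconnected u v)

lemma torusG_finite_neighborSet (T : TorusData n) (a : TorusV T) :
    ((torusG T).neighborSet a).Finite := by
  refine ((Set.finite_range fun m => a + tmk T (e n m)).union
    (Set.finite_range fun m => a - tmk T (e n m))).subset ?_
  rintro b ⟨-, m, hm | hm⟩
  · exact .inl ⟨m, show a + _ = b by rw [← hm, add_sub_cancel]⟩
  · exact .inr ⟨m, show a - _ = b by rw [← hm, sub_sub_cancel]⟩

instance (T : TorusData n) : (torusG T).LocallyFinite :=
  fun a => (torusG_finite_neighborSet T a).fintype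

lemma torusG_dist_eq_l1dist {T : TorusData n} (hdist : DistCond T) {x u v : Fin n → ℤ}
    (hu : l1dist x u ≤ 2) (hv : l1dist x v ≤ 2) :
    ((torusG T).dist (tmk T u) (tmk T v) : ℤ) = l1dist u v := by
  rw [← grid_dist_eq_l1dist] at hu hv
  rw [← hdist x u v (by exact_mod_cast hu) (by exact_mod_cast hv), grid_dist_eq_l1dist]

lemma torusG_adj_cycle {T : TorusData n} (hdist : DistCond T) (z : Fin n → ℤ) (i : Fin n)
    (j : ℤ) :
    (torusG T).Adj (tmk T (z + j • e n i)) (tmk T (z + (j + 1) • e n i)) := by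
  have h := torusG_dist_eq_l1dist hdist (x := z + j • e n i) (v := z + (j + 1) • e n i)
    (by rw [l1dist_self]; norm_num) (by rw [l1dist_smul_e_add_smul_e]; norm_num)
  rw [l1dist_smul_e_add_smul_e, show j - (j + 1) = -1 by ring, abs_neg, abs_one] at h
  exact SimpleGraph.dist_eq_one_iff_adj.mp (by exact_mod_cast h)

/-- All points involved lie in the ball of radius 2 around `z + j • e n i`, where the distance
condition turns torus distances into `ℓ¹` distances. -/
lemma torusG_dist_cycle_prev {T : TorusData n} (hdist : DistCond T) (z : Fin n → ℤ)
    (i : Fin n) (j : ℤ) {δ : Fin n → ℤ} (hδ : l1dist δ 0 ≤ 1) :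
    (torusG T).dist (tmk T (z + (j - 1) • e n i)) (tmk T (z + (j + 1) • e n i + δ)) =
      (torusG T).dist (tmk T (z + j • e n i)) (tmk T (z + (j + 1) • e n i + δ)) + 1 := by
  have hδi : |δ i| + ∑ k ∈ {i}ᶜ, |δ k| ≤ 1 := by
    simpa [l1dist_eq_abs_add_sum_compl δ 0 i] using hδ
  have hrest : 0 ≤ ∑ k ∈ ({i}ᶜ : Finset (Fin n)), |δ k| :=
    Finset.sum_nonneg fun _ _ => abs_nonneg _
  obtain ⟨hδ₁, hδ₂⟩ := abs_le.mp (show |δ i| ≤ 1 by linarith)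
  have hfar : l1dist (z + j • e n i) (z + (j + 1) • e n i + δ) ≤ 2 := by
    rw [l1dist_add_smul_e_add, abs_of_nonpos (by linarith)]
    linarith [le_abs_self (δ i)]
  have hprev := torusG_dist_eq_l1dist hdist (u := z + (j - 1) • e n i)
    (by rw [l1dist_smul_e_add_smul_e]; norm_num) hfar
  have hcur := torusG_dist_eq_l1dist hdist (by rw [l1dist_self]; norm_num) hfar
  rw [l1dist_add_smul_e_add, abs_of_nonpos (by linarith)] at hprev hcur
  omega

end Torus

theorem torus_cycle_curvature_nonpos_general (n : ℕ) (T : TorusData n)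
    (wT : TorusV T → TorusV T → ℝ)
    (hdist : DistCond T)
    (z : Fin n → ℤ) (i : Fin n) :
    ∑ j ∈ Finset.range T.q,
      kappa (torusG T) wT (tmk T (z + (j : ℤ) • e n i)) (tmk T (z + ((j : ℤ) + 1) • e n i))
      ≤ 0 := by
  have hper : Function.Periodic (fun j : ℤ => tmk T (z + j • e n i)) T.q := fun j => by
    simp only [add_smul, ← add_assoc]
    exact QuotientAddGroup.mk_add_of_mem _ (q_smul_e_mem_lat T i)
  refine sum_kappa_cycle_nonpos (torusG_connected T) wT hper (torusG_adj_cycle hdist z i) ?_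
  intro j b hb
  obtain ⟨δ, hδ, rfl⟩ := exists_l1dist_le_one_of_eq_or_adj hb
  exact torusG_dist_cycle_prev hdist z i j hδ

/-- the sum of the Ollivier curvatures along a fundamental cycle of a
discrete weighted torus satisfying the distance condition is non-positive. -/
theorem torus_cycle_curvature_nonpos (n : ℕ) (T : TorusData n)
    (wT : TorusV T → TorusV T → ℝ)
    (hsymm : ∀ a b, wT a b = wT b a)
    (hpos : ∀ a b, (torusG T).Adj a b → 0 < wT a b)
    (hdist : DistCond T)
    (z : Fin n → ℤ) (i : Fin n) :
    ∑ j ∈ Finset.range T.q,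
      kappa (torusG T) wT (tmk T (z + (j : ℤ) • e n i)) (tmk T (z + ((j : ℤ) + 1) • e n i))
      ≤ 0 :=
  torus_cycle_curvature_nonpos_general n T wT hdist z i

end PMT
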